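/- Let q > 5 and C₁, C₂, C₃ > 0. Suppose f : 𝕋³ × ℝ³ → [0,∞) is continuously differentiable and satisfies (1) ‖f‖_{L∞_q} + ‖∇_{x,v} f‖_{L∞_q} < C₁, (2) ρ_f(x) + |U_f(x)| + T_f(x) < C₂ for all x ∈ 𝕋³, and (3) ρ_f(x) > C₃ and T_f(x) > C₃ for all x ∈ 𝕋³. Then there exists a constant C > 0, depending only on q, C₁, C₂, C₃, such that ‖𝓜(f)‖_{L∞_q} + ‖∇_{x,v} 𝓜(f)‖_{L∞_q} ≤ C ( ‖f‖_{L∞_q} + ‖∇_{x,v} f‖_{L∞_q} ). -/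

import Mathlib

/-!
The left-hand side is bounded by a constant depending only on `q, C₁, C₂, C₃`, while the
right-hand side is at least `C₃ / J` with `J = ∫ (1 + |v|)² / (1 + |v|^q) dv`, because
`C₃ < ρ_f(x) ≤ ‖f‖_{L∞_q} J`.

For the upper bound, the bound on `∇ₓ f` makes the moments of `f` of order at most two in `v`
Lipschitz in `x`, with constants controlled by `J`, which is finite because `q > 5`. Dividing
by `ρ_f > C₃` keeps `U_f` and `T_f` Lipschitz, and since also `T_f > C₃`, the Maxwellian is
Lipschitz on the unit ball around `(x, v)` with constant `≲ (1 + |v|)² exp(-|v|²/(8C₂))`.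
This bounds its derivative, and the Gaussian factor absorbs the weight `1 + |v|^q`.
-/

open MeasureTheory Real
open scoped ENNReal

noncomputable section

/-- Euclidean space `ℝ³`. -/
abbrev E3 : Type := EuclideanSpace ℝ (Fin 3)

/-- Integer translation vector, used to express periodicity in `x`
(a function on `𝕋³ = ℝ³/ℤ³` is a `ℤ³`-periodic function on `ℝ³`). -/
def intVec (k : Fin 3 → ℤ) : E3 := WithLp.toLp 2 (fun i => (k i : ℝ))

/-- Local density `ρ_f(x) = ∫ f(x,v) dv`. -/
def densX (f : E3 × E3 → ℝ) (x : E3) : ℝ := ∫ v, f (x, v)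

/-- Bulk velocity `U_f(x)`, defined by `ρ_f(x) U_f(x) = ∫ v f(x,v) dv`. -/
def bulkX (f : E3 × E3 → ℝ) (x : E3) : E3 := (densX f x)⁻¹ • ∫ v, f (x, v) • v

/-- Temperature `T_f(x)`, defined by `3 ρ_f(x) T_f(x) = ∫ |v - U_f(x)|² f(x,v) dv`. -/
def tempX (f : E3 × E3 → ℝ) (x : E3) : ℝ :=
  (3 * densX f x)⁻¹ * ∫ v, ‖v - bulkX f x‖ ^ 2 * f (x, v)

/-- The local Maxwellian
`𝓜(f)(x,v) = ρ_f(x) (2π T_f(x))^{-3/2} exp(-|v - U_f(x)|²/(2 T_f(x)))`. -/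
def maxwX (f : E3 × E3 → ℝ) : E3 × E3 → ℝ := fun p =>
  densX f p.1 * (2 * π * tempX f p.1) ^ (-(3 : ℝ) / 2) *
    Real.exp (-‖p.2 - bulkX f p.1‖ ^ 2 / (2 * tempX f p.1))

/-- Weighted norm `‖g‖_{L∞_q} = ess sup_{(x,v)} (1 + |v|^q)|g(x,v)|` (valued in `ℝ≥0∞`);
for `g` periodic in `x` this agrees with the essential supremum over `𝕋³ × ℝ³`. -/
def wnormX (q : ℝ) (g : E3 × E3 → ℝ) : ℝ≥0∞ :=
  essSup (fun p => ENNReal.ofReal ((1 + ‖p.2‖ ^ q) * |g p|)) volume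

open scoped NNReal

theorem abs_exp_sub_exp_le_max_mul (s t : ℝ) :
    |exp s - exp t| ≤ max (exp s) (exp t) * |s - t| := by
  wlog hts : t ≤ s generalizing s t
  · rw [abs_sub_comm, abs_sub_comm s, max_comm]
    exact this t s (le_of_not_ge hts)
  have key : exp s - exp t ≤ (s - t) * exp s := by
    have h := add_one_le_exp (t - s)
    rw [exp_sub] at h
    have := exp_pos s
    field_simp at h
    nlinarith
  rw [abs_of_nonneg (sub_nonneg.2 (exp_le_exp.2 hts)), abs_of_nonneg (sub_nonneg.2 hts),
    max_eq_left (exp_le_exp.2 hts)]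
  linarith

theorem abs_inv_sub_inv_le {a b c : ℝ} (hc : 0 < c) (ha : c ≤ a) (hb : c ≤ b) :
    |a⁻¹ - b⁻¹| ≤ |a - b| / c ^ 2 := by
  have ha0 : 0 < a := hc.trans_le ha
  have hb0 : 0 < b := hc.trans_le hb
  rw [inv_sub_inv ha0.ne' hb0.ne', abs_div, abs_sub_comm, abs_of_pos (mul_pos ha0 hb0), sq]
  gcongr

theorem norm_inv_smul_sub_inv_smul_le {F : Type*} [NormedAddCommGroup F] [NormedSpace ℝ F]
    {a b c : ℝ} (hc : 0 < c) (ha : c ≤ a) (hb : c ≤ b) (m n : F) :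
    ‖a⁻¹ • m - b⁻¹ • n‖ ≤ ‖m - n‖ / c + |a - b| / c ^ 2 * ‖n‖ := by
  have hsplit : a⁻¹ • m - b⁻¹ • n = a⁻¹ • (m - n) + (a⁻¹ - b⁻¹) • n := by
    rw [smul_sub, sub_smul]; abel
  rw [hsplit]
  refine (norm_add_le _ _).trans (add_le_add ?_ ?_)
  · rw [norm_smul, Real.norm_of_nonneg (inv_nonneg.2 (hc.le.trans ha)), inv_mul_eq_div]
    gcongr
  · rw [norm_smul, Real.norm_eq_abs]
    gcongr
    exact abs_inv_sub_inv_le hc ha hb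

theorem abs_norm_sq_sub_norm_sq_le {E : Type*} [SeminormedAddCommGroup E] (a b : E) :
    |‖a‖ ^ 2 - ‖b‖ ^ 2| ≤ ‖a - b‖ * (‖a‖ + ‖b‖) := by
  rw [sq_sub_sq, abs_mul, abs_of_nonneg (by positivity : 0 ≤ ‖a‖ + ‖b‖), mul_comm]
  gcongr
  exact abs_norm_sub_norm_le a b

theorem abs_rpow_sub_rpow_le_of_nonpos {p c s t : ℝ} (hp : p ≤ 0) (hc : 0 < c)
    (hs : c ≤ s) (ht : c ≤ t) : |s ^ p - t ^ p| ≤ -p * c ^ (p - 1) * |s - t| := by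
  have hderiv : ∀ u ∈ Set.Ici c, HasDerivAt (fun u : ℝ => u ^ p) (p * u ^ (p - 1)) u :=
    fun u hu => hasDerivAt_rpow_const (Or.inl (hc.trans_le hu).ne')
  have hbound : ∀ u ∈ Set.Ici c, ‖deriv (fun u : ℝ => u ^ p) u‖ ≤ -p * c ^ (p - 1) := by
    intro u hu
    rw [(hderiv u hu).deriv, norm_mul, Real.norm_of_nonpos hp,
      Real.norm_of_nonneg (rpow_nonneg (hc.le.trans hu) _)]
    exact mul_le_mul_of_nonneg_left (rpow_le_rpow_of_nonpos hc hu (by linarith)) (by linarith)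
  simpa only [Real.norm_eq_abs] using (convex_Ici c).norm_image_sub_le_of_norm_deriv_le
    (fun u hu => (hderiv u hu).differentiableAt) hbound ht hs

theorem one_add_rpow_le_mul_exp {s a t : ℝ} (hs : 0 < s) (ha : 0 < a) (ht : 0 ≤ t) :
    1 + t ^ s ≤ (1 + exp (s ^ 2 / (2 * a))) * exp (a * t ^ 2) := by
  have h1 : 1 ≤ exp (a * t ^ 2) := one_le_exp (by positivity)
  suffices t ^ s ≤ exp (s ^ 2 / (2 * a)) * exp (a * t ^ 2) by nlinarith
  rcases le_or_gt t 1 with h | h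
  · nlinarith [rpow_le_one ht h hs.le, one_le_exp (by positivity : 0 ≤ s ^ 2 / (2 * a))]
  · have ht0 : 0 < t := one_pos.trans h
    rw [rpow_def_of_pos ht0, ← exp_add, exp_le_exp]
    have hlog : log t * s ≤ s * t := by nlinarith [log_le_sub_one_of_pos ht0]
    have hamgm : s * t ≤ s ^ 2 / (2 * a) + a * t ^ 2 := by
      rw [div_add' _ _ _ (by positivity), le_div_iff₀ (by positivity)]
      nlinarith [sq_nonneg (s - 2 * a * t)]
    linarith

theorem one_add_rpow_le_two_rpow_mul {q t : ℝ} (hq : 0 ≤ q) (ht : 0 ≤ t) :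
    (1 + t) ^ q ≤ 2 ^ q * (1 + t ^ q) := by
  rcases le_total t 1 with h | h
  · calc (1 + t) ^ q ≤ 2 ^ q := by gcongr; linarith
      _ ≤ 2 ^ q * (1 + t ^ q) := le_mul_of_one_le_right (by positivity)
          (by linarith [rpow_nonneg ht q])
  · calc (1 + t) ^ q ≤ (2 * t) ^ q := by gcongr; linarith
      _ = 2 ^ q * t ^ q := mul_rpow (by norm_num) ht
      _ ≤ 2 ^ q * (1 + t ^ q) := by gcongr; linarith

theorem exists_one_add_rpow_mul_sq_mul_exp_le {q b : ℝ} (hq : 0 < q) (hb : 0 < b) :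
    ∃ K, ∀ t, 0 ≤ t → (1 + t ^ q) * ((1 + t) ^ 2 * exp (-t ^ 2 / b)) ≤ K := by
  set a := (2 * b)⁻¹
  have ha : 0 < a := by positivity
  refine ⟨(1 + exp (q ^ 2 / (2 * a))) * (2 * (1 + exp ((2:ℝ) ^ 2 / (2 * a)))), fun t ht => ?_⟩
  have hq' := one_add_rpow_le_mul_exp hq ha ht
  have h2 : (1 + t) ^ 2 ≤ 2 * ((1 + exp ((2:ℝ) ^ 2 / (2 * a))) * exp (a * t ^ 2)) := by
    have := one_add_rpow_le_mul_exp two_pos ha ht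
    rw [rpow_two] at this
    nlinarith [sq_nonneg (1 - t)]
  have hexp : exp (a * t ^ 2) * exp (a * t ^ 2) * exp (-t ^ 2 / b) = 1 := by
    rw [← exp_add, ← exp_add, ← exp_zero]
    congr 1
    simp only [a]
    field_simp
    ring
  calc (1 + t ^ q) * ((1 + t) ^ 2 * exp (-t ^ 2 / b))
      ≤ ((1 + exp (q ^ 2 / (2 * a))) * exp (a * t ^ 2)) *
          ((2 * ((1 + exp ((2:ℝ) ^ 2 / (2 * a))) * exp (a * t ^ 2))) * exp (-t ^ 2 / b)) := by
        gcongr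
    _ = _ := by linear_combination ((1 + exp (q ^ 2 / (2 * a))) *
          (2 * (1 + exp ((2:ℝ) ^ 2 / (2 * a))))) * hexp

theorem exp_neg_norm_sub_sq_div_le {E : Type*} [SeminormedAddCommGroup E] {u v v₀ : E}
    {T B : ℝ} (hT : 0 < T) (hTB : T ≤ B) (hu : ‖u‖ ≤ B) (hv : ‖v - v₀‖ ≤ 1) :
    exp (-(‖v - u‖ ^ 2 / (2 * T))) ≤ exp ((B + 1) ^ 2 / (4 * B)) * exp (-‖v₀‖ ^ 2 / (8 * B)) := by
  have hB : 0 < B := hT.trans_le hTB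
  have hv₀ : ‖v₀‖ ≤ ‖v - u‖ + (B + 1) := by
    calc ‖v₀‖ = ‖(v - u) + u - (v - v₀)‖ := by abel_nf
      _ ≤ ‖v - u‖ + ‖u‖ + ‖v - v₀‖ := norm_sub_le_of_le (norm_add_le _ _) le_rfl
      _ ≤ ‖v - u‖ + (B + 1) := by linarith
  have hsq : ‖v₀‖ ^ 2 ≤ 2 * ‖v - u‖ ^ 2 + 2 * (B + 1) ^ 2 := by
    nlinarith [norm_nonneg v₀, sq_nonneg (‖v - u‖ - (B + 1))]
  have h1 : ‖v - u‖ ^ 2 / (4 * B) ≤ ‖v - u‖ ^ 2 / (2 * T) := by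
    gcongr
    linarith
  have h2 : ‖v₀‖ ^ 2 / (8 * B) ≤ ‖v - u‖ ^ 2 / (4 * B) + (B + 1) ^ 2 / (4 * B) := by
    rw [← add_div, div_le_div_iff₀ (by positivity) (by positivity)]
    nlinarith
  rw [← exp_add, exp_le_exp, neg_div]
  linarith

/-- The weight `(1 + |v|)² / (1 + |v|^q)` dominates the integrands of all moments of order
at most two of a function bounded by `C / (1 + |v|^q)`. -/
def momentWeight {E : Type*} [Norm E] (q : ℝ) (v : E) : ℝ := (1 + ‖v‖) ^ 2 / (1 + ‖v‖ ^ q)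

open Module in
theorem integrable_momentWeight {E : Type*} [NormedAddCommGroup E] [NormedSpace ℝ E]
    [FiniteDimensional ℝ E] [MeasurableSpace E] [BorelSpace E] {μ : Measure E}
    [μ.IsAddHaarMeasure] {q : ℝ} (hq : finrank ℝ E + 2 < q) :
    Integrable (momentWeight q) μ := by
  have hq0 : 0 < q := by linarith [(Nat.cast_nonneg (finrank ℝ E) : (0:ℝ) ≤ _)]
  refine ((integrable_one_add_norm (μ := μ) (by linarith : (finrank ℝ E : ℝ) < q - 2)).const_mul
    (2 ^ q)).mono' ?_ (ae_of_all _ ?_)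
  · have hpos : ∀ v : E, 1 + ‖v‖ ^ q ≠ 0 := fun v => by positivity
    exact (((continuous_const.add continuous_norm).pow 2).div (continuous_const.add
      (continuous_norm.rpow_const fun _ => Or.inr hq0.le)) hpos).aestronglyMeasurable
  intro v
  have h1t : 0 < 1 + ‖v‖ := by positivity
  rw [momentWeight, Real.norm_of_nonneg (by positivity), rpow_neg h1t.le, rpow_sub h1t,
    rpow_two, inv_div, mul_div_assoc', div_le_div_iff₀ (by positivity) (by positivity)]
  have := mul_le_mul_of_nonneg_left (one_add_rpow_le_two_rpow_mul hq0.le (norm_nonneg v))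
    (sq_nonneg (1 + ‖v‖))
  linarith

theorem wnormX_le_ofReal {q M : ℝ} {g : E3 × E3 → ℝ}
    (h : ∀ p : E3 × E3, (1 + ‖p.2‖ ^ q) * |g p| ≤ M) : wnormX q g ≤ ENNReal.ofReal M :=
  essSup_le_of_ae_le _ (ae_of_all _ fun p => ENNReal.ofReal_le_ofReal (h p))

theorem abs_le_of_wnormX_le_ofReal {q M : ℝ} (hq : 0 ≤ q) {g : E3 × E3 → ℝ}
    (hg : Continuous g) (hM : 0 ≤ M) (h : wnormX q g ≤ ENNReal.ofReal M) (p : E3 × E3) :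
    |g p| ≤ M / (1 + ‖p.2‖ ^ q) := by
  have hw : ∀ p : E3 × E3, 0 < 1 + ‖p.2‖ ^ q := fun p => by positivity
  have hae : ∀ᵐ p : E3 × E3, (1 + ‖p.2‖ ^ q) * |g p| ≤ M :=
    (ENNReal.ae_le_essSup _).mono fun p hp => (ENNReal.ofReal_le_ofReal_iff hM).1 (hp.trans h)
  -- a closed set of full measure is everything
  have hclosed : IsClosed {p : E3 × E3 | (1 + ‖p.2‖ ^ q) * |g p| ≤ M} :=
    isClosed_le ((continuous_const.add
      (continuous_snd.norm.rpow_const fun _ => Or.inr hq)).mul hg.abs) continuous_const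
  have hp : p ∈ {p : E3 × E3 | (1 + ‖p.2‖ ^ q) * |g p| ≤ M} := by
    rw [← hclosed.closure_eq, (Measure.dense_of_ae hae).closure_eq]
    trivial
  rw [le_div_iff₀ (hw p), mul_comm]
  exact hp

theorem abs_sub_le_of_norm_fderiv_le {E F G : Type*} [NormedAddCommGroup E] [NormedSpace ℝ E]
    [NormedAddCommGroup F] [NormedSpace ℝ F] [NormedAddCommGroup G] [NormedSpace ℝ G]
    {f : E × F → G} (hf : Differentiable ℝ f) {v : F} {B : ℝ}
    (hB : ∀ x, ‖fderiv ℝ f (x, v)‖ ≤ B) (x y : E) :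
    ‖f (x, v) - f (y, v)‖ ≤ B * ‖x - y‖ := by
  have hconv : Convex ℝ ((Set.univ : Set E) ×ˢ {v}) := convex_univ.prod (convex_singleton v)
  have h := hconv.norm_image_sub_le_of_norm_fderiv_le (C := B) (fun p _ => hf p)
    (fun ⟨x', v'⟩ hp => by obtain rfl : v' = v := hp.2; exact hB x')
    (Set.mk_mem_prod (Set.mem_univ y) rfl) (Set.mk_mem_prod (Set.mem_univ x) rfl)
  rwa [Prod.mk_sub_mk, sub_self, Prod.norm_mk, norm_zero,
    max_eq_left (norm_nonneg _)] at h

theorem integrable_momentWeight_of_five_lt {q : ℝ} (hq : 5 < q) :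
    Integrable (fun v : E3 => momentWeight q v) := by
  have h : (Module.finrank ℝ E3 : ℝ) + 2 < q := by
    rw [finrank_euclideanSpace_fin]; push_cast; linarith
  exact integrable_momentWeight h

theorem densX_le_toReal_wnormX_mul {q : ℝ} (hq : 5 < q) {f : E3 × E3 → ℝ} (hf : Continuous f)
    (hfin : wnormX q f ≠ ⊤) (x : E3) :
    densX f x ≤ (wnormX q f).toReal * ∫ v : E3, momentWeight q v := by
  set W := (wnormX q f).toReal
  have hbound : ∀ v, ‖f (x, v)‖ ≤ W * momentWeight q v := fun v => by
    rw [Real.norm_eq_abs, momentWeight, mul_div_assoc']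
    refine (abs_le_of_wnormX_le_ofReal (by linarith) hf ENNReal.toReal_nonneg
      (ENNReal.ofReal_toReal hfin).ge (x, v)).trans ?_
    gcongr
    exact le_mul_of_one_le_right ENNReal.toReal_nonneg (one_le_pow₀ (by linarith [norm_nonneg v]))
  rw [← integral_const_mul]
  exact (le_abs_self _).trans (norm_integral_le_of_norm_le
    ((integrable_momentWeight_of_five_lt hq).const_mul W) (ae_of_all _ hbound))

theorem densX_smul_bulkX {f : E3 × E3 → ℝ} {x : E3} (h : densX f x ≠ 0) :
    densX f x • bulkX f x = ∫ v, f (x, v) • v := by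
  rw [bulkX, smul_inv_smul₀ h]

theorem three_mul_densX_mul_tempX {f : E3 × E3 → ℝ} {x : E3} (h : densX f x ≠ 0) :
    3 * densX f x * tempX f x = ∫ v, ‖v - bulkX f x‖ ^ 2 * f (x, v) := by
  rw [tempX, mul_inv_cancel_left₀ (mul_ne_zero three_ne_zero h)]

def maxwAmplitude (f : E3 × E3 → ℝ) (x : E3) : ℝ :=
  densX f x * (2 * π * tempX f x) ^ (-(3 : ℝ) / 2)

def maxwExponent (f : E3 × E3 → ℝ) (p : E3 × E3) : ℝ :=
  ‖p.2 - bulkX f p.1‖ ^ 2 / (2 * tempX f p.1)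

theorem maxwX_eq (f : E3 × E3 → ℝ) (p : E3 × E3) :
    maxwX f p = maxwAmplitude f p.1 * exp (-maxwExponent f p) := by
  simp only [maxwX, maxwAmplitude, maxwExponent, neg_div]

structure Admissible (q C₁ C₂ C₃ : ℝ) (f : E3 × E3 → ℝ) : Prop where
  continuous : Continuous f
  abs_le : ∀ p : E3 × E3, |f p| ≤ C₁ / (1 + ‖p.2‖ ^ q)
  abs_sub_le : ∀ x y v : E3, |f (x, v) - f (y, v)| ≤ C₁ / (1 + ‖v‖ ^ q) * ‖x - y‖
  lt_densX : ∀ x, C₃ < densX f x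
  densX_lt : ∀ x, densX f x < C₂
  norm_bulkX_lt : ∀ x, ‖bulkX f x‖ < C₂
  lt_tempX : ∀ x, C₃ < tempX f x
  tempX_lt : ∀ x, tempX f x < C₂

theorem admissible_of_wnormX_lt {q C₁ C₂ C₃ : ℝ} (hq : 0 ≤ q) (hC₃ : 0 < C₃)
    {f : E3 × E3 → ℝ} (hf : ContDiff ℝ 1 f)
    (hnorm : wnormX q f + wnormX q (fun p => ‖fderiv ℝ f p‖) < ENNReal.ofReal C₁)
    (hup : ∀ x, densX f x + ‖bulkX f x‖ + tempX f x < C₂)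
    (hlow : ∀ x, C₃ < densX f x ∧ C₃ < tempX f x) : Admissible q C₁ C₂ C₃ f := by
  have hC₁ : 0 ≤ C₁ := (ENNReal.ofReal_pos.1 (zero_le.trans_lt hnorm)).le
  have hderiv : ∀ p, ‖fderiv ℝ f p‖ ≤ C₁ / (1 + ‖p.2‖ ^ q) := fun p => by
    simpa using abs_le_of_wnormX_le_ofReal hq (hf.continuous_fderiv one_ne_zero).norm hC₁
      (le_add_self.trans hnorm.le) p
  refine ⟨hf.continuous, abs_le_of_wnormX_le_ofReal hq hf.continuous hC₁
    (le_self_add.trans hnorm.le), fun x y v => ?_, fun x => (hlow x).1, fun x => ?_,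
    fun x => ?_, fun x => (hlow x).2, fun x => ?_⟩
  · exact abs_sub_le_of_norm_fderiv_le (hf.differentiable one_ne_zero) (fun x => hderiv (x, v)) x y
  all_goals linarith [hup x, hlow x, norm_nonneg (bulkX f x)]

namespace Admissible

variable {q C₁ C₂ C₃ : ℝ} {f : E3 × E3 → ℝ} {F : Type*} [NormedAddCommGroup F] [NormedSpace ℝ F]

theorem norm_smul_le (hf : Admissible q C₁ C₂ C₃ f) {B : ℝ} {φ : F} {x v : E3}
    (hB : ‖φ‖ ≤ B * (1 + ‖v‖) ^ 2) : ‖f (x, v) • φ‖ ≤ C₁ * B * momentWeight q v := by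
  rw [norm_smul, Real.norm_eq_abs, momentWeight]
  calc |f (x, v)| * ‖φ‖ ≤ C₁ / (1 + ‖v‖ ^ q) * (B * (1 + ‖v‖) ^ 2) :=
        mul_le_mul (hf.abs_le (x, v)) hB (norm_nonneg _) ((abs_nonneg _).trans (hf.abs_le (x, v)))
    _ = C₁ * B * ((1 + ‖v‖) ^ 2 / (1 + ‖v‖ ^ q)) := by ring

theorem integrable_smul (hq : 5 < q) (hf : Admissible q C₁ C₂ C₃ f) {φ : E3 → F}
    (hφ : Continuous φ) {B : ℝ} (hB : ∀ v, ‖φ v‖ ≤ B * (1 + ‖v‖) ^ 2) (x : E3) :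
    Integrable (fun v => f (x, v) • φ v) :=
  ((integrable_momentWeight_of_five_lt hq).const_mul (C₁ * B)).mono'
    ((hf.continuous.comp (Continuous.prodMk_right x)).smul hφ).aestronglyMeasurable
    (ae_of_all _ fun _ => hf.norm_smul_le (hB _))

theorem norm_integral_smul_sub_le (hq : 5 < q) (hf : Admissible q C₁ C₂ C₃ f)
    {φ : E3 → E3 → F} (hφ : ∀ x, Continuous (φ x)) {B L : ℝ}
    (hB : ∀ x v, ‖φ x v‖ ≤ B * (1 + ‖v‖) ^ 2)
    (hL : ∀ x y v, ‖φ x v - φ y v‖ ≤ L * ‖x - y‖ * (1 + ‖v‖) ^ 2) (x y : E3) :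
    ‖(∫ v, f (x, v) • φ x v) - ∫ v, f (y, v) • φ y v‖ ≤
      C₁ * (B + L) * (∫ v : E3, momentWeight q v) * ‖x - y‖ := by
  have hpt : ∀ v, ‖f (x, v) • φ x v - f (y, v) • φ y v‖ ≤
      C₁ * (B + L) * ‖x - y‖ * momentWeight q v := by
    intro v
    have hsplit : f (x, v) • φ x v - f (y, v) • φ y v =
        (f (x, v) - f (y, v)) • φ x v + f (y, v) • (φ x v - φ y v) := by
      rw [sub_smul, smul_sub]; abel
    have hw : 0 ≤ C₁ / (1 + ‖v‖ ^ q) := (abs_nonneg _).trans (hf.abs_le (x, v))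
    rw [hsplit, momentWeight]
    refine (norm_add_le _ _).trans ?_
    rw [norm_smul, norm_smul, Real.norm_eq_abs, Real.norm_eq_abs]
    calc |f (x, v) - f (y, v)| * ‖φ x v‖ + |f (y, v)| * ‖φ x v - φ y v‖
        ≤ C₁ / (1 + ‖v‖ ^ q) * ‖x - y‖ * (B * (1 + ‖v‖) ^ 2) +
            C₁ / (1 + ‖v‖ ^ q) * (L * ‖x - y‖ * (1 + ‖v‖) ^ 2) := by
          gcongr
          · exact hf.abs_sub_le x y v
          · exact hB x v
          · exact hf.abs_le (y, v)
          · exact hL x y v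
      _ = C₁ * (B + L) * ‖x - y‖ * ((1 + ‖v‖) ^ 2 / (1 + ‖v‖ ^ q)) := by ring
  rw [← integral_sub (hf.integrable_smul hq (hφ x) (hB x) x)
    (hf.integrable_smul hq (hφ y) (hB y) y)]
  calc _ ≤ ∫ v, C₁ * (B + L) * ‖x - y‖ * momentWeight q v :=
        norm_integral_le_of_norm_le
          ((integrable_momentWeight_of_five_lt hq).const_mul _) (ae_of_all _ hpt)
    _ = _ := by rw [integral_const_mul]; ring

theorem abs_densX_sub_le (hq : 5 < q) (hf : Admissible q C₁ C₂ C₃ f) (x y : E3) :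
    |densX f x - densX f y| ≤ C₁ * (∫ v : E3, momentWeight q v) * ‖x - y‖ := by
  have h := hf.norm_integral_smul_sub_le hq (φ := fun _ _ => (1 : ℝ)) (B := 1) (L := 0)
    (fun _ => continuous_const) (fun _ v => by rw [norm_one, one_mul]; nlinarith [norm_nonneg v])
    (fun _ _ _ => by simp) x y
  simpa [densX] using h

theorem norm_momentum_sub_le (hq : 5 < q) (hf : Admissible q C₁ C₂ C₃ f) (x y : E3) :
    ‖(∫ v, f (x, v) • v) - ∫ v, f (y, v) • v‖ ≤
      C₁ * (∫ v : E3, momentWeight q v) * ‖x - y‖ := by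
  have h := hf.norm_integral_smul_sub_le hq (φ := fun _ v => v) (B := 1) (L := 0)
    (fun _ => continuous_id) (fun _ v => by nlinarith [norm_nonneg v])
    (fun _ _ _ => by simp) x y
  simpa using h

theorem norm_momentum_le (hf : Admissible q C₁ C₂ C₃ f) (hC₃ : 0 ≤ C₃) (x : E3) :
    ‖∫ v, f (x, v) • v‖ ≤ C₂ ^ 2 := by
  have hρ := hC₃.trans_lt (hf.lt_densX x)
  rw [← densX_smul_bulkX hρ.ne', norm_smul, Real.norm_of_nonneg hρ.le, sq]
  exact mul_le_mul (hf.densX_lt x).le (hf.norm_bulkX_lt x).le (norm_nonneg _)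
    (hρ.le.trans (hf.densX_lt x).le)

theorem norm_sub_bulkX_le (hf : Admissible q C₁ C₂ C₃ f) (x v : E3) :
    ‖v - bulkX f x‖ ≤ (1 + C₂) * (1 + ‖v‖) := by
  have hU := hf.norm_bulkX_lt x
  nlinarith [norm_sub_le v (bulkX f x), norm_nonneg v, norm_nonneg (bulkX f x)]

theorem abs_norm_sub_bulkX_sq_sub_le (hf : Admissible q C₁ C₂ C₃ f) {LU : ℝ≥0}
    (hLU : LipschitzWith LU (bulkX f)) (x y v : E3) :
    |‖v - bulkX f x‖ ^ 2 - ‖v - bulkX f y‖ ^ 2| ≤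
      2 * (1 + C₂) * LU * ‖x - y‖ * (1 + ‖v‖) ^ 2 := by
  have h1C : 0 ≤ 1 + C₂ := by linarith [hf.norm_bulkX_lt x, norm_nonneg (bulkX f x)]
  calc _ ≤ ‖(v - bulkX f x) - (v - bulkX f y)‖ * (‖v - bulkX f x‖ + ‖v - bulkX f y‖) :=
        abs_norm_sq_sub_norm_sq_le _ _
    _ ≤ LU * ‖x - y‖ * ((1 + C₂) * (1 + ‖v‖) + (1 + C₂) * (1 + ‖v‖)) := by
        rw [sub_sub_sub_cancel_left, norm_sub_rev]
        gcongr
        · exact hLU.norm_sub_le x y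
        · exact hf.norm_sub_bulkX_le x v
        · exact hf.norm_sub_bulkX_le y v
    _ = 2 * (1 + C₂) * LU * ‖x - y‖ * (1 + ‖v‖) := by ring
    _ ≤ _ := by
        gcongr
        nlinarith [norm_nonneg v]

theorem norm_energy_le (hf : Admissible q C₁ C₂ C₃ f) (hC₃ : 0 ≤ C₃) (x : E3) :
    ‖∫ v, ‖v - bulkX f x‖ ^ 2 * f (x, v)‖ ≤ 3 * C₂ ^ 2 := by
  have hρ := hC₃.trans_lt (hf.lt_densX x)
  have hT := hC₃.trans_lt (hf.lt_tempX x)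
  rw [← three_mul_densX_mul_tempX hρ.ne', Real.norm_of_nonneg (by positivity), sq, ← mul_assoc]
  exact mul_le_mul (by linarith [hf.densX_lt x]) (hf.tempX_lt x).le hT.le
    (by linarith [hf.densX_lt x])

theorem abs_norm_sub_bulkX_sq_sub_le_of_norm_sub_le_one (hf : Admissible q C₁ C₂ C₃ f)
    {LU : ℝ≥0} (hLU : LipschitzWith LU (bulkX f)) {p p₀ : E3 × E3} (hp : ‖p - p₀‖ ≤ 1) :
    |‖p.2 - bulkX f p.1‖ ^ 2 - ‖p₀.2 - bulkX f p₀.1‖ ^ 2| ≤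
      3 * (1 + C₂) * (1 + LU) * (1 + ‖p₀.2‖) ^ 2 * ‖p - p₀‖ := by
  set r := 1 + ‖p₀.2‖
  have hv : ‖p.2 - p₀.2‖ ≤ ‖p - p₀‖ := norm_snd_le (p - p₀)
  have hC₂ : 0 ≤ 1 + C₂ := by linarith [hf.norm_bulkX_lt p.1, norm_nonneg (bulkX f p.1)]
  have ha : ‖p.2 - bulkX f p.1‖ ≤ 2 * (1 + C₂) * r := by
    refine (hf.norm_sub_bulkX_le _ _).trans ?_
    have : ‖p.2‖ ≤ ‖p₀.2‖ + 1 := by linarith [norm_le_norm_add_norm_sub' p.2 p₀.2]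
    nlinarith [norm_nonneg p₀.2]
  have hab : ‖(p.2 - bulkX f p.1) - (p₀.2 - bulkX f p₀.1)‖ ≤ (1 + LU) * ‖p - p₀‖ := by
    calc _ = ‖(p.2 - p₀.2) - (bulkX f p.1 - bulkX f p₀.1)‖ := by abel_nf
      _ ≤ ‖p - p₀‖ + LU * ‖p - p₀‖ := by
          refine (norm_sub_le _ _).trans (add_le_add hv ((hLU.norm_sub_le _ _).trans ?_))
          gcongr
          exact norm_fst_le (p - p₀)
      _ = (1 + LU) * ‖p - p₀‖ := by ring
  refine (abs_norm_sq_sub_norm_sq_le _ _).trans ?_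
  calc _ ≤ (1 + LU) * ‖p - p₀‖ * (2 * (1 + C₂) * r + (1 + C₂) * r) := by
        gcongr
        exact hf.norm_sub_bulkX_le _ _
    _ = 3 * (1 + C₂) * (1 + LU) * r * ‖p - p₀‖ := by ring
    _ ≤ _ := by
        gcongr
        nlinarith [norm_nonneg p₀.2]

theorem maxwAmplitude_nonneg (hf : Admissible q C₁ C₂ C₃ f) (hC₃ : 0 ≤ C₃) (x : E3) :
    0 ≤ maxwAmplitude f x :=
  mul_nonneg (hC₃.trans (hf.lt_densX x).le)
    (rpow_nonneg (by nlinarith [pi_pos, hf.lt_tempX x]) _)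

theorem maxwAmplitude_le (hf : Admissible q C₁ C₂ C₃ f) (hC₃ : 0 < C₃) (x : E3) :
    maxwAmplitude f x ≤ C₂ * (2 * π * C₃) ^ (-(3 : ℝ) / 2) := by
  have hT := hf.lt_tempX x
  exact mul_le_mul (hf.densX_lt x).le
    (rpow_le_rpow_of_nonpos (by positivity) (by nlinarith [pi_pos]) (by norm_num))
    (rpow_nonneg (by nlinarith [pi_pos]) _) (by linarith [hf.lt_densX x, hf.densX_lt x])

theorem exp_neg_maxwExponent_le (hf : Admissible q C₁ C₂ C₃ f) (hC₃ : 0 ≤ C₃)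
    {p p₀ : E3 × E3} (h : ‖p - p₀‖ ≤ 1) :
    exp (-maxwExponent f p) ≤ exp ((C₂ + 1) ^ 2 / (4 * C₂)) * exp (-‖p₀.2‖ ^ 2 / (8 * C₂)) :=
  exp_neg_norm_sub_sq_div_le (hC₃.trans_lt (hf.lt_tempX p.1)) (hf.tempX_lt p.1).le
    (hf.norm_bulkX_lt p.1).le ((norm_snd_le (p - p₀)).trans h)

end Admissible

theorem exists_lipschitzWith_bulkX {q C₁ C₂ C₃ : ℝ} (hq : 5 < q) (hC₃ : 0 < C₃) :
    ∃ L : ℝ≥0, ∀ f, Admissible q C₁ C₂ C₃ f → LipschitzWith L (bulkX f) := by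
  set J := ∫ v : E3, momentWeight q v
  refine ⟨(C₁ * J / C₃ + C₁ * J / C₃ ^ 2 * C₂ ^ 2).toNNReal,
    fun f hf => LipschitzWith.of_dist_le' fun x y => ?_⟩
  have hρ := hf.abs_densX_sub_le hq x y
  rw [dist_eq_norm, dist_eq_norm]
  calc ‖bulkX f x - bulkX f y‖
      ≤ ‖(∫ v, f (x, v) • v) - ∫ v, f (y, v) • v‖ / C₃ +
          |densX f x - densX f y| / C₃ ^ 2 * ‖∫ v, f (y, v) • v‖ :=
        norm_inv_smul_sub_inv_smul_le hC₃ (hf.lt_densX x).le (hf.lt_densX y).le _ _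
    _ ≤ C₁ * J * ‖x - y‖ / C₃ + C₁ * J * ‖x - y‖ / C₃ ^ 2 * C₂ ^ 2 := by
        have hρ' : 0 ≤ C₁ * J * ‖x - y‖ := (abs_nonneg _).trans hρ
        gcongr
        exacts [hf.norm_momentum_sub_le hq x y, hf.norm_momentum_le hC₃.le y]
    _ = (C₁ * J / C₃ + C₁ * J / C₃ ^ 2 * C₂ ^ 2) * ‖x - y‖ := by ring

theorem exists_lipschitzWith_tempX {q C₁ C₂ C₃ : ℝ} (hq : 5 < q) (hC₃ : 0 < C₃) :
    ∃ L : ℝ≥0, ∀ f, Admissible q C₁ C₂ C₃ f → LipschitzWith L (tempX f) := by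
  obtain ⟨LU, hLU⟩ := exists_lipschitzWith_bulkX (C₁ := C₁) (C₂ := C₂) hq hC₃
  set J := ∫ v : E3, momentWeight q v
  set B := (1 + C₂) ^ 2
  set L := 2 * (1 + C₂) * LU
  refine ⟨(C₁ * (B + L) * J / (3 * C₃) + 3 * (C₁ * J) / (3 * C₃) ^ 2 * (3 * C₂ ^ 2)
    ).toNNReal, fun f hf => LipschitzWith.of_dist_le' fun x y => ?_⟩
  have hφB : ∀ x v, ‖‖v - bulkX f x‖ ^ 2‖ ≤ B * (1 + ‖v‖) ^ 2 := fun x v => by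
    rw [norm_pow, norm_norm, ← mul_pow]
    exact pow_le_pow_left₀ (norm_nonneg _) (hf.norm_sub_bulkX_le x v) 2
  have hφL : ∀ x y v, ‖‖v - bulkX f x‖ ^ 2 - ‖v - bulkX f y‖ ^ 2‖ ≤
      L * ‖x - y‖ * (1 + ‖v‖) ^ 2 := fun x y v => by
    rw [Real.norm_eq_abs]
    exact hf.abs_norm_sub_bulkX_sq_sub_le (hLU f hf) x y v
  have hE := hf.norm_integral_smul_sub_le hq (fun x => by fun_prop) hφB hφL x y
  have hcomm : ∀ z, ∫ v, f (z, v) • ‖v - bulkX f z‖ ^ 2 =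
      ∫ v, ‖v - bulkX f z‖ ^ 2 * f (z, v) := fun z => by congr 1; ext v; exact mul_comm _ _
  rw [hcomm, hcomm] at hE
  have h3ρ : |3 * densX f x - 3 * densX f y| ≤ 3 * (C₁ * J * ‖x - y‖) := by
    rw [← mul_sub, abs_mul, abs_of_pos three_pos]
    exact mul_le_mul_of_nonneg_left (hf.abs_densX_sub_le hq x y) three_pos.le
  rw [dist_eq_norm, dist_eq_norm]
  calc ‖tempX f x - tempX f y‖
      ≤ ‖(∫ v, ‖v - bulkX f x‖ ^ 2 * f (x, v)) - ∫ v, ‖v - bulkX f y‖ ^ 2 * f (y, v)‖ /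
          (3 * C₃) + |3 * densX f x - 3 * densX f y| / (3 * C₃) ^ 2 *
          ‖∫ v, ‖v - bulkX f y‖ ^ 2 * f (y, v)‖ :=
        norm_inv_smul_sub_inv_smul_le (by positivity) (by linarith [hf.lt_densX x])
          (by linarith [hf.lt_densX y]) _ _
    _ ≤ C₁ * (B + L) * J * ‖x - y‖ / (3 * C₃) +
          3 * (C₁ * J * ‖x - y‖) / (3 * C₃) ^ 2 * (3 * C₂ ^ 2) := by
        gcongr
        · exact div_nonneg ((abs_nonneg _).trans h3ρ) (by positivity)
        · exact hf.norm_energy_le hC₃.le y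
    _ = _ := by ring

theorem exists_lipschitzWith_maxwAmplitude {q C₁ C₂ C₃ : ℝ} (hq : 5 < q) (hC₃ : 0 < C₃) :
    ∃ L : ℝ≥0, ∀ f, Admissible q C₁ C₂ C₃ f → LipschitzWith L (maxwAmplitude f) := by
  obtain ⟨LT, hLT⟩ := exists_lipschitzWith_tempX (C₁ := C₁) (C₂ := C₂) hq hC₃
  set J := ∫ v : E3, momentWeight q v
  set c := 2 * π * C₃
  have hc : 0 < c := by positivity
  refine ⟨(C₁ * J * c ^ (-(3 : ℝ) / 2) + C₂ * (3 / 2 * c ^ (-(3 : ℝ) / 2 - 1) * (2 * π * LT))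
    ).toNNReal, fun f hf => LipschitzWith.of_dist_le' fun x y => ?_⟩
  have hcT : ∀ x, c ≤ 2 * π * tempX f x := fun x => by nlinarith [pi_pos, hf.lt_tempX x]
  have hg : ∀ x, (2 * π * tempX f x) ^ (-(3 : ℝ) / 2) ≤ c ^ (-(3 : ℝ) / 2) := fun x =>
    rpow_le_rpow_of_nonpos hc (hcT x) (by norm_num)
  have hdg : |(2 * π * tempX f x) ^ (-(3 : ℝ) / 2) - (2 * π * tempX f y) ^ (-(3 : ℝ) / 2)| ≤
      3 / 2 * c ^ (-(3 : ℝ) / 2 - 1) * (2 * π * LT * ‖x - y‖) := by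
    refine (abs_rpow_sub_rpow_le_of_nonpos (by norm_num) hc (hcT x) (hcT y)).trans ?_
    rw [← mul_sub, abs_mul, abs_of_pos (by positivity), mul_assoc (2 * π)]
    gcongr
    · norm_num
    · rw [← Real.norm_eq_abs]
      exact (hLT f hf).norm_sub_le x y
  have hρ := hf.abs_densX_sub_le hq x y
  have hsplit : maxwAmplitude f x - maxwAmplitude f y =
      (densX f x - densX f y) * (2 * π * tempX f x) ^ (-(3 : ℝ) / 2) +
        densX f y * ((2 * π * tempX f x) ^ (-(3 : ℝ) / 2) -
          (2 * π * tempX f y) ^ (-(3 : ℝ) / 2)) := by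
    simp only [maxwAmplitude]; ring
  rw [Real.dist_eq, dist_eq_norm, hsplit]
  refine (abs_add_le _ _).trans ?_
  have hgx := rpow_pos_of_pos (hc.trans_le (hcT x)) (-(3 : ℝ) / 2)
  rw [abs_mul, abs_mul, abs_of_pos hgx, abs_of_pos (hC₃.trans (hf.lt_densX y))]
  calc _ ≤ C₁ * J * ‖x - y‖ * c ^ (-(3 : ℝ) / 2) +
        C₂ * (3 / 2 * c ^ (-(3 : ℝ) / 2 - 1) * (2 * π * LT * ‖x - y‖)) := by
        refine add_le_add (mul_le_mul hρ (hg x) hgx.le ((abs_nonneg _).trans hρ))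
          (mul_le_mul (hf.densX_lt y).le hdg (abs_nonneg _) ?_)
        linarith [hC₃.trans (hf.lt_densX y), hf.densX_lt y]
    _ = _ := by ring

theorem exists_abs_maxwExponent_sub_le {q C₁ C₂ C₃ : ℝ} (hq : 5 < q) (hC₃ : 0 < C₃) :
    ∃ L : ℝ≥0, ∀ f, Admissible q C₁ C₂ C₃ f → ∀ p p₀ : E3 × E3, ‖p - p₀‖ ≤ 1 →
      |maxwExponent f p - maxwExponent f p₀| ≤ L * (1 + ‖p₀.2‖) ^ 2 * ‖p - p₀‖ := by
  obtain ⟨LU, hLU⟩ := exists_lipschitzWith_bulkX (C₁ := C₁) (C₂ := C₂) hq hC₃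
  obtain ⟨LT, hLT⟩ := exists_lipschitzWith_tempX (C₁ := C₁) (C₂ := C₂) hq hC₃
  set K := 3 * (1 + C₂) * (1 + LU) / (2 * C₃) + 2 * LT * (1 + C₂) ^ 2 / (2 * C₃) ^ 2
  refine ⟨K.toNNReal, fun f hf p p₀ hp => ?_⟩
  set r := 1 + ‖p₀.2‖
  have hT : |2 * tempX f p.1 - 2 * tempX f p₀.1| ≤ 2 * LT * ‖p - p₀‖ := by
    rw [← mul_sub, abs_mul, abs_two, mul_assoc, ← Real.norm_eq_abs]
    gcongr
    exact ((hLT f hf).norm_sub_le _ _).trans (by gcongr; exact norm_fst_le (p - p₀))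
  have hb : ‖‖p₀.2 - bulkX f p₀.1‖ ^ 2‖ ≤ (1 + C₂) ^ 2 * r ^ 2 := by
    rw [norm_pow, norm_norm, ← mul_pow]
    exact pow_le_pow_left₀ (norm_nonneg _) (hf.norm_sub_bulkX_le _ _) 2
  have h2C : ∀ x, 2 * C₃ ≤ 2 * tempX f x := fun x => by linarith [hf.lt_tempX x]
  calc |maxwExponent f p - maxwExponent f p₀|
      = ‖(2 * tempX f p.1)⁻¹ • ‖p.2 - bulkX f p.1‖ ^ 2 -
          (2 * tempX f p₀.1)⁻¹ • ‖p₀.2 - bulkX f p₀.1‖ ^ 2‖ := by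
        simp only [maxwExponent, smul_eq_mul, Real.norm_eq_abs, div_eq_inv_mul]
    _ ≤ ‖‖p.2 - bulkX f p.1‖ ^ 2 - ‖p₀.2 - bulkX f p₀.1‖ ^ 2‖ / (2 * C₃) +
          |2 * tempX f p.1 - 2 * tempX f p₀.1| / (2 * C₃) ^ 2 *
            ‖‖p₀.2 - bulkX f p₀.1‖ ^ 2‖ :=
        norm_inv_smul_sub_inv_smul_le (by positivity) (h2C _) (h2C _) _ _
    _ ≤ 3 * (1 + C₂) * (1 + LU) * r ^ 2 * ‖p - p₀‖ / (2 * C₃) +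
          2 * LT * ‖p - p₀‖ / (2 * C₃) ^ 2 * ((1 + C₂) ^ 2 * r ^ 2) := by
        rw [Real.norm_eq_abs]
        gcongr
        exact hf.abs_norm_sub_bulkX_sq_sub_le_of_norm_sub_le_one (hLU f hf) hp
    _ = K * r ^ 2 * ‖p - p₀‖ := by ring
    _ ≤ _ := by gcongr; exact Real.le_coe_toNNReal K

theorem exists_abs_maxwX_sub_le {q C₁ C₂ C₃ : ℝ} (hq : 5 < q) (hC₃ : 0 < C₃) :
    ∃ K : ℝ≥0, ∀ f, Admissible q C₁ C₂ C₃ f → ∀ p p₀ : E3 × E3, ‖p - p₀‖ ≤ 1 →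
      |maxwX f p - maxwX f p₀| ≤
        K * ((1 + ‖p₀.2‖) ^ 2 * exp (-‖p₀.2‖ ^ 2 / (8 * C₂))) * ‖p - p₀‖ := by
  obtain ⟨LA, hLA⟩ := exists_lipschitzWith_maxwAmplitude (C₁ := C₁) (C₂ := C₂) hq hC₃
  obtain ⟨Lφ, hLφ⟩ := exists_abs_maxwExponent_sub_le (C₁ := C₁) (C₂ := C₂) hq hC₃
  set Γ := exp ((C₂ + 1) ^ 2 / (4 * C₂))
  set Amax := C₂ * (2 * π * C₃) ^ (-(3 : ℝ) / 2)
  refine ⟨(Γ * (LA + Amax * Lφ)).toNNReal, fun f hf p p₀ hp => ?_⟩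
  set r := 1 + ‖p₀.2‖
  set g := exp (-‖p₀.2‖ ^ 2 / (8 * C₂))
  have hr : 1 ≤ r ^ 2 := one_le_pow₀ (by simp only [r]; linarith [norm_nonneg p₀.2])
  have hA₀ := hf.maxwAmplitude_nonneg hC₃.le p₀.1
  have hE := hf.exp_neg_maxwExponent_le hC₃.le hp
  have hE₀ := hf.exp_neg_maxwExponent_le hC₃.le (p := p₀) (p₀ := p₀) (by simp)
  have hsplit : maxwX f p - maxwX f p₀ =
      (maxwAmplitude f p.1 - maxwAmplitude f p₀.1) * exp (-maxwExponent f p) +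
        maxwAmplitude f p₀.1 * (exp (-maxwExponent f p) - exp (-maxwExponent f p₀)) := by
    rw [maxwX_eq, maxwX_eq]; ring
  have hdA : |maxwAmplitude f p.1 - maxwAmplitude f p₀.1| ≤ LA * ‖p - p₀‖ := by
    rw [← Real.norm_eq_abs]
    exact ((hLA f hf).norm_sub_le _ _).trans (by gcongr; exact norm_fst_le (p - p₀))
  have hdE : |exp (-maxwExponent f p) - exp (-maxwExponent f p₀)| ≤
      Γ * g * (Lφ * r ^ 2 * ‖p - p₀‖) := by
    refine (abs_exp_sub_exp_le_max_mul _ _).trans ?_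
    rw [neg_sub_neg, abs_sub_comm]
    exact mul_le_mul (max_le hE hE₀) (hLφ f hf p p₀ hp) (abs_nonneg _) (by positivity)
  rw [hsplit]
  refine (abs_add_le _ _).trans ?_
  rw [abs_mul, abs_mul, abs_of_pos (exp_pos _), abs_of_nonneg hA₀]
  calc _ ≤ LA * ‖p - p₀‖ * (Γ * g) + Amax * (Γ * g * (Lφ * r ^ 2 * ‖p - p₀‖)) :=
        add_le_add (mul_le_mul hdA hE (exp_pos _).le (by positivity))
          (mul_le_mul (hf.maxwAmplitude_le hC₃ p₀.1) hdE (abs_nonneg _)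
            (hA₀.trans (hf.maxwAmplitude_le hC₃ p₀.1)))
    _ ≤ LA * ‖p - p₀‖ * (Γ * g) * r ^ 2 + Amax * (Γ * g * (Lφ * r ^ 2 * ‖p - p₀‖)) :=
        add_le_add_left (le_mul_of_one_le_right (by positivity) hr) _
    _ = Γ * (LA + Amax * Lφ) * (r ^ 2 * g) * ‖p - p₀‖ := by ring
    _ ≤ _ := by gcongr; exact Real.le_coe_toNNReal _

theorem exists_abs_maxwX_le_and_norm_fderiv_le {q C₁ C₂ C₃ : ℝ} (hq : 5 < q) (hC₃ : 0 < C₃) :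
    ∃ K : ℝ≥0, ∀ f, Admissible q C₁ C₂ C₃ f → ∀ p : E3 × E3,
      |maxwX f p| ≤ K * ((1 + ‖p.2‖) ^ 2 * exp (-‖p.2‖ ^ 2 / (8 * C₂))) ∧
      ‖fderiv ℝ (maxwX f) p‖ ≤ K * ((1 + ‖p.2‖) ^ 2 * exp (-‖p.2‖ ^ 2 / (8 * C₂))) := by
  obtain ⟨KL, hKL⟩ := exists_abs_maxwX_sub_le (C₁ := C₁) (C₂ := C₂) hq hC₃
  set K₀ := C₂ * (2 * π * C₃) ^ (-(3 : ℝ) / 2) * exp ((C₂ + 1) ^ 2 / (4 * C₂))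
  refine ⟨max KL K₀.toNNReal, fun f hf p => ⟨?_, ?_⟩⟩
  · have hA := hf.maxwAmplitude_nonneg hC₃.le p.1
    have hr : 1 ≤ (1 + ‖p.2‖) ^ 2 := one_le_pow₀ (by linarith [norm_nonneg p.2])
    rw [maxwX_eq, abs_of_nonneg (mul_nonneg hA (exp_pos _).le)]
    calc _ ≤ C₂ * (2 * π * C₃) ^ (-(3 : ℝ) / 2) *
          (exp ((C₂ + 1) ^ 2 / (4 * C₂)) * exp (-‖p.2‖ ^ 2 / (8 * C₂))) :=
          mul_le_mul (hf.maxwAmplitude_le hC₃ p.1)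
            (hf.exp_neg_maxwExponent_le hC₃.le (p₀ := p) (by simp))
            (exp_pos _).le (hA.trans (hf.maxwAmplitude_le hC₃ p.1))
      _ ≤ K₀.toNNReal * exp (-‖p.2‖ ^ 2 / (8 * C₂)) := by
          rw [← mul_assoc]; gcongr; exact Real.le_coe_toNNReal K₀
      _ ≤ _ := by
          gcongr
          · exact le_max_right _ _
          · exact le_mul_of_one_le_left (exp_pos _).le hr
  · refine norm_fderiv_le_of_lip' ℝ (by positivity) ?_
    filter_upwards [Metric.closedBall_mem_nhds p one_pos] with p' hp'
    rw [Metric.mem_closedBall, dist_eq_norm] at hp'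
    refine (hKL f hf p' p hp').trans ?_
    gcongr
    exact le_max_left _ _

theorem exists_wnormX_maxwX_add_le {q C₁ C₂ C₃ : ℝ} (hq : 5 < q) (hC₂ : 0 < C₂) (hC₃ : 0 < C₃) :
    ∃ M, 0 ≤ M ∧ ∀ f, Admissible q C₁ C₂ C₃ f →
      wnormX q (maxwX f) + wnormX q (fun p => ‖fderiv ℝ (maxwX f) p‖) ≤ ENNReal.ofReal M := by
  obtain ⟨K, hK⟩ := exists_abs_maxwX_le_and_norm_fderiv_le (C₁ := C₁) (C₂ := C₂) hq hC₃
  obtain ⟨W, hW⟩ := exists_one_add_rpow_mul_sq_mul_exp_le (by linarith : 0 < q)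
    (by positivity : 0 < 8 * C₂)
  have hweighted : ∀ {g : E3 × E3 → ℝ},
      (∀ p, |g p| ≤ K * ((1 + ‖p.2‖) ^ 2 * exp (-‖p.2‖ ^ 2 / (8 * C₂)))) →
      wnormX q g ≤ ENNReal.ofReal (K * W) := fun {g} hg => wnormX_le_ofReal fun p => by
    calc (1 + ‖p.2‖ ^ q) * |g p|
        ≤ (1 + ‖p.2‖ ^ q) * (K * ((1 + ‖p.2‖) ^ 2 * exp (-‖p.2‖ ^ 2 / (8 * C₂)))) := by
          gcongr; exact hg p
      _ = K * ((1 + ‖p.2‖ ^ q) * ((1 + ‖p.2‖) ^ 2 * exp (-‖p.2‖ ^ 2 / (8 * C₂)))) := by ring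
      _ ≤ K * W := by gcongr; exact hW _ (norm_nonneg _)
  have hW₀ : 0 ≤ W := le_trans (by positivity) (hW 0 le_rfl)
  refine ⟨K * W + K * W, by positivity, fun f hf => ?_⟩
  rw [ENNReal.ofReal_add (by positivity) (by positivity)]
  exact add_le_add (hweighted fun p => (hK f hf p).1)
    (hweighted fun p => by rw [abs_norm]; exact (hK f hf p).2)

theorem stmt_2_general (q C₁ C₂ C₃ : ℝ) (hq : 5 < q) (hC₂ : 0 < C₂) (hC₃ : 0 < C₃) :
    ∃ C : ℝ, 0 < C ∧
      ∀ f : E3 × E3 → ℝ, ContDiff ℝ 1 f → (∀ p, 0 ≤ f p) →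
        (∀ (x v : E3) (k : Fin 3 → ℤ), f (x + intVec k, v) = f (x, v)) →
        wnormX q f + wnormX q (fun p => ‖fderiv ℝ f p‖) < ENNReal.ofReal C₁ →
        (∀ x : E3, densX f x + ‖bulkX f x‖ + tempX f x < C₂) →
        (∀ x : E3, C₃ < densX f x ∧ C₃ < tempX f x) →
        wnormX q (maxwX f) + wnormX q (fun p => ‖fderiv ℝ (maxwX f) p‖) ≤
          ENNReal.ofReal C * (wnormX q f + wnormX q (fun p => ‖fderiv ℝ f p‖)) := by
  obtain ⟨M, hM₀, hM⟩ := exists_wnormX_maxwX_add_le (C₁ := C₁) hq hC₂ hC₃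
  set J := ∫ v : E3, momentWeight q v
  have hJ : 0 ≤ J := integral_nonneg fun v => by unfold momentWeight; positivity
  refine ⟨M * J / C₃ + 1, by positivity, fun f hf _ _ hnorm hup hlow => ?_⟩
  set W := wnormX q f
  have hfin : W ≠ ⊤ := ne_top_of_le_ne_top ENNReal.ofReal_ne_top (le_self_add.trans hnorm.le)
  have hWJ : C₃ < W.toReal * J :=
    (hlow 0).1.trans_le (densX_le_toReal_wnormX_mul hq hf.continuous hfin 0)
  have hM' : M ≤ (M * J / C₃ + 1) * W.toReal := by
    have hm : M ≤ M * (W.toReal * J) / C₃ := by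
      rw [le_div_iff₀ hC₃]
      exact mul_le_mul_of_nonneg_left hWJ.le hM₀
    calc M ≤ M * (W.toReal * J) / C₃ + W.toReal := le_add_of_le_of_nonneg hm ENNReal.toReal_nonneg
      _ = (M * J / C₃ + 1) * W.toReal := by ring
  calc _ ≤ ENNReal.ofReal M :=
        hM f (admissible_of_wnormX_lt (by linarith) hC₃ hf hnorm hup hlow)
    _ ≤ ENNReal.ofReal ((M * J / C₃ + 1) * W.toReal) := ENNReal.ofReal_le_ofReal hM'
    _ = ENNReal.ofReal (M * J / C₃ + 1) * W := by
        rw [ENNReal.ofReal_mul (by positivity), ENNReal.ofReal_toReal hfin]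
    _ ≤ _ := by gcongr; exact le_self_add

/-- Weighted `L∞_q` bound for the local Maxwellian and its `(x,v)`-gradient:
if a `C¹` function `f ≥ 0` on `𝕋³ × ℝ³` satisfies
`‖f‖_{L∞_q} + ‖∇_{x,v}f‖_{L∞_q} < C₁`, `ρ_f + |U_f| + T_f < C₂` and `ρ_f, T_f > C₃`,
then `‖𝓜(f)‖_{L∞_q} + ‖∇_{x,v}𝓜(f)‖_{L∞_q} ≤ C (‖f‖_{L∞_q} + ‖∇_{x,v}f‖_{L∞_q})`
with `C` depending only on `q, C₁, C₂, C₃`. -/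
theorem stmt_2 (q C₁ C₂ C₃ : ℝ) (hq : 5 < q) (hC₁ : 0 < C₁) (hC₂ : 0 < C₂) (hC₃ : 0 < C₃) :
    ∃ C : ℝ, 0 < C ∧
      ∀ f : E3 × E3 → ℝ, ContDiff ℝ 1 f → (∀ p, 0 ≤ f p) →
        (∀ (x v : E3) (k : Fin 3 → ℤ), f (x + intVec k, v) = f (x, v)) →
        wnormX q f + wnormX q (fun p => ‖fderiv ℝ f p‖) < ENNReal.ofReal C₁ →
        (∀ x : E3, densX f x + ‖bulkX f x‖ + tempX f x < C₂) →
        (∀ x : E3, C₃ < densX f x ∧ C₃ < tempX f x) →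
        wnormX q (maxwX f) + wnormX q (fun p => ‖fderiv ℝ (maxwX f) p‖) ≤
          ENNReal.ofReal C * (wnormX q f + wnormX q (fun p => ‖fderiv ℝ f p‖)) :=
  stmt_2_general q C₁ C₂ C₃ hq hC₂ hC₃

end
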